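/- Let R be a Euclidean domain and > a global monomial ordering on the monomials of R[x₁,…,xₙ]. Let h, k ∈ R[x₁,…,xₙ] be nonzero polynomials such that LM(k) divides LM(h), and let r := LC(h) mod LC(k) be the remainder of LC(h) upon division by LC(k) in R, with r ≠ LC(h). Set h' := h + ((r − LC(h))/LC(k))·(LM(h)/LM(k))·k. Then h' ≡ h modulo the ideal ⟨k⟩, the coefficient of the monomial LM(h) in h' equals r, and LM(h') ≤ LM(h), with LM(h') = LM(h) exactly when r ≠ 0. -/

import Mathlib

open MvPolynomial

variable {n : ℕ} {R : Type*} [EuclideanDomain R]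

/-- The leading exponent of a polynomial w.r.t. a monomial order (leading exponent of 0 is 0). -/
noncomputable def leadExp (m : MonomialOrder (Fin n)) (f : MvPolynomial (Fin n) R) :
    Fin n →₀ ℕ :=
  m.toSyn.symm (f.support.sup fun d => m.toSyn d)

/-- The leading coefficient. -/
noncomputable def leadCoeff (m : MonomialOrder (Fin n)) (f : MvPolynomial (Fin n) R) : R :=
  f.coeff (leadExp m f)

/-- The leading term. -/
noncomputable def leadTerm (m : MonomialOrder (Fin n)) (f : MvPolynomial (Fin n) R) :
    MvPolynomial (Fin n) R :=
  monomial (leadExp m f) (leadCoeff m f)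

/-- The leading monomial, as an element of `WithBot m.syn`; `leadMon m 0 = ⊥`. -/
noncomputable def leadMon (m : MonomialOrder (Fin n)) (f : MvPolynomial (Fin n) R) :
    WithBot m.syn :=
  f.support.sup fun d => (m.toSyn d : WithBot m.syn)

/-- The leading ideal of a set of polynomials. -/
noncomputable def leadIdeal (m : MonomialOrder (Fin n)) (S : Set (MvPolynomial (Fin n) R)) :
    Ideal (MvPolynomial (Fin n) R) :=
  Ideal.span (leadTerm m '' S)

/-- The S-polynomial. -/
noncomputable def spoly [DecidableEq R] (m : MonomialOrder (Fin n))
    (f g : MvPolynomial (Fin n) R) : MvPolynomial (Fin n) R :=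
  monomial (leadExp m f ⊔ leadExp m g - leadExp m f)
      (EuclideanDomain.lcm (leadCoeff m f) (leadCoeff m g) / leadCoeff m f) * f -
    monomial (leadExp m f ⊔ leadExp m g - leadExp m g)
      (EuclideanDomain.lcm (leadCoeff m f) (leadCoeff m g) / leadCoeff m g) * g

open scoped MonomialOrder

namespace EuclideanDomain

theorem mod_sub_self_div {R : Type*} [EuclideanDomain R] (a : R) {b : R} (hb : b ≠ 0) :
    (a % b - a) / b = -(a / b) := by
  rw [mod_eq_sub_mul_div, sub_sub_cancel_left, ← mul_neg]
  exact mul_div_cancel_left₀ _ hb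

end EuclideanDomain

namespace MonomialOrder

variable {σ : Type*} {R : Type*} [CommSemiring R] (m : MonomialOrder σ)

theorem degree_add_monomial_mul_le {f g : MvPolynomial σ R} {s : σ →₀ ℕ} (c : R)
    (hs : s + m.degree g = m.degree f) :
    m.degree (f + monomial s c * g) ≼[m] m.degree f := by
  refine m.degree_add_le.trans (sup_le le_rfl ?_)
  calc m.toSyn (m.degree (monomial s c * g))
      ≤ m.toSyn (m.degree (monomial s c)) + m.toSyn (m.degree g) := by
        rw [← map_add]; exact m.degree_mul_le
    _ ≤ m.toSyn s + m.toSyn (m.degree g) := add_le_add_left (m.degree_monomial_le c) _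
    _ = m.toSyn (m.degree f) := by rw [← map_add, hs]

theorem coeff_degree_add_monomial_mul {f g : MvPolynomial σ R} {s : σ →₀ ℕ} (c : R)
    (hs : s + m.degree g = m.degree f) :
    (f + monomial s c * g).coeff (m.degree f) = m.leadingCoeff f + c * m.leadingCoeff g := by
  rw [coeff_add, ← hs, coeff_monomial_mul, hs]
  rfl

end MonomialOrder

section LeadMon

variable (m : MonomialOrder (Fin n))

theorem leadExp_eq_degree (f : MvPolynomial (Fin n) R) : leadExp m f = m.degree f := rfl

theorem leadCoeff_eq_leadingCoeff (f : MvPolynomial (Fin n) R) :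
    leadCoeff m f = m.leadingCoeff f := rfl

theorem leadMon_le_coe_iff {f : MvPolynomial (Fin n) R} {a : m.syn} :
    leadMon m f ≤ a ↔ ∀ d ∈ f.support, m.toSyn d ≤ a := by
  simp only [leadMon, Finset.sup_le_iff, WithBot.coe_le_coe]

theorem leadMon_of_ne_zero {f : MvPolynomial (Fin n) R} (hf : f ≠ 0) :
    leadMon m f = m.toSyn (m.degree f) :=
  le_antisymm (leadMon_le_coe_iff m |>.2 fun _ => m.le_degree)
    (Finset.le_sup (f := fun d => (m.toSyn d : WithBot m.syn))
      ((m.degree_mem_support_iff f).2 hf))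

theorem leadMon_le_of_degree_le {f : MvPolynomial (Fin n) R} {e : Fin n →₀ ℕ}
    (hf : m.degree f ≼[m] e) : leadMon m f ≤ m.toSyn e :=
  leadMon_le_coe_iff m |>.2 fun _ hd => (m.le_degree hd).trans hf

theorem leadMon_eq_iff_coeff_ne_zero {f : MvPolynomial (Fin n) R} {e : Fin n →₀ ℕ}
    (hf : m.degree f ≼[m] e) : leadMon m f = m.toSyn e ↔ f.coeff e ≠ 0 := by
  by_cases hf0 : f = 0
  · simp [hf0, leadMon]
  rw [leadMon_of_ne_zero m hf0, WithBot.coe_inj, m.toSyn.injective.eq_iff]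
  constructor
  · rintro rfl
    exact m.coeff_degree_ne_zero_iff.2 hf0
  · intro he
    exact m.toSyn.injective (le_antisymm hf (m.le_degree (mem_support_iff.2 he)))

end LeadMon

-- The step subtracts `(LC h div LC k) * (LM h / LM k) * k`, which cancels the quotient part
-- of `LC h` and cannot create monomials above `LM h`.
theorem interreduce_step_mod_general
    {n : ℕ} {R : Type*} [EuclideanDomain R]
    (m : MonomialOrder (Fin n))
    (h k : MvPolynomial (Fin n) R)
    (hh0 : h ≠ 0) (hk0 : k ≠ 0)
    (hdvd : leadExp m k ≤ leadExp m h)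
    (r : R) (hr : r = leadCoeff m h % leadCoeff m k)
    (h' : MvPolynomial (Fin n) R)
    (hh' : h' = h + C ((r - leadCoeff m h) / leadCoeff m k) *
      monomial (leadExp m h - leadExp m k) 1 * k) :
    h' - h ∈ Ideal.span ({k} : Set (MvPolynomial (Fin n) R)) ∧
    h'.coeff (leadExp m h) = r ∧
    leadMon m h' ≤ leadMon m h ∧
    (leadMon m h' = leadMon m h ↔ r ≠ 0) := by
  rw [C_mul_monomial, mul_one] at hh'
  simp only [leadExp_eq_degree, leadCoeff_eq_leadingCoeff] at hdvd hr hh' ⊢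
  have hs : m.degree h - m.degree k + m.degree k = m.degree h := tsub_add_cancel_of_le hdvd
  have hcoeff : h'.coeff (m.degree h) = r := by
    rw [hh', m.coeff_degree_add_monomial_mul _ hs, hr,
      EuclideanDomain.mod_sub_self_div _ (m.leadingCoeff_ne_zero_iff.2 hk0),
      EuclideanDomain.mod_eq_sub_mul_div]
    ring
  have hdeg : m.degree h' ≼[m] m.degree h := hh' ▸ m.degree_add_monomial_mul_le _ hs
  refine ⟨?_, hcoeff, ?_, ?_⟩
  · rw [hh', add_sub_cancel_left]
    exact Ideal.mul_mem_left _ _ (Ideal.mem_span_singleton_self k)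
  · exact leadMon_of_ne_zero m hh0 ▸ leadMon_le_of_degree_le m hdeg
  · rw [leadMon_of_ne_zero m hh0, leadMon_eq_iff_coeff_ne_zero m hdeg, hcoeff]

/-- One remainder step in `Interreduce`: if `h, k` are nonzero with `LM k ∣ LM h`, and
`r = LC h mod LC k` satisfies `r ≠ LC h`, then for
`h' = h + ((r - LC h)/LC k) * (LM h / LM k) * k` we have `h' ≡ h` modulo `⟨k⟩`,
the coefficient of `LM h` in `h'` equals `r`, and `LM h' ≤ LM h` with equality
exactly when `r ≠ 0`. -/
theorem interreduce_step_mod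
    {n : ℕ} {R : Type*} [EuclideanDomain R]
    (m : MonomialOrder (Fin n))
    (h k : MvPolynomial (Fin n) R)
    (hh0 : h ≠ 0) (hk0 : k ≠ 0)
    (hdvd : leadExp m k ≤ leadExp m h)
    (r : R) (hr : r = leadCoeff m h % leadCoeff m k) (hrne : r ≠ leadCoeff m h)
    (h' : MvPolynomial (Fin n) R)
    (hh' : h' = h + C ((r - leadCoeff m h) / leadCoeff m k) *
      monomial (leadExp m h - leadExp m k) 1 * k) :
    h' - h ∈ Ideal.span ({k} : Set (MvPolynomial (Fin n) R)) ∧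
    h'.coeff (leadExp m h) = r ∧
    leadMon m h' ≤ leadMon m h ∧
    (leadMon m h' = leadMon m h ↔ r ≠ 0) :=
  interreduce_step_mod_general m h k hh0 hk0 hdvd r hr h' hh'
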